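/- arXiv:2510.09206 — 2 statements merged into one kernel-verified Lean document; each statement's English description precedes it below -/
import Mathlib

section
/- Let f, g : ℝ → ℝ₊ be integrable unimodal functions. Then the essential supremum of the convolution f ⋆ g is at least the essential supremum of f↓ ⋆ g↓, where f↓ and g↓ are the decreasing rearrangements of f and g. -/
open MeasureTheory ENNReal

/-- Decreasing rearrangement of a set `A ⊆ ℝ`: the interval `[0, |A|)`
(all of `[0, ∞)` if `A` has infinite measure). -/
def setRearr (A : Set ℝ) : Set ℝ := {x | 0 ≤ x ∧ ENNReal.ofReal x < volume A}

/-- Decreasing rearrangement of a nonnegative real function: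
`f↓(x) = sup {λ : x ∈ {f > λ}↓}`. -/
noncomputable def decRearrNN (f : ℝ → ℝ) : ℝ → ℝ :=
  fun x => sSup {l : ℝ | x ∈ setRearr {y | l < f y}}

/-- Convolution of two real functions: `(f ⋆ g)(x) = ∫ f(t) g(x - t) dt`. -/
noncomputable def conv (f g : ℝ → ℝ) : ℝ → ℝ := fun x => ∫ t, f t * g (x - t)

/-- Essential supremum (w.r.t. Lebesgue measure) of a real function, valued in `ℝ≥0∞`. -/
noncomputable def essSupNN (f : ℝ → ℝ) : ℝ≥0∞ :=
  essSup (fun x => ENNReal.ofReal (f x)) volume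

/-- `f : ℝ → ℝ` is unimodal: non-decreasing on `(-∞, x₀)` and non-increasing
on `(x₀, ∞)` for some `x₀`. -/
def Unimodal (f : ℝ → ℝ) : Prop :=
  ∃ x₀ : ℝ, MonotoneOn f (Set.Iio x₀) ∧ AntitoneOn f (Set.Ioi x₀)

/-!
By the layer-cake formula, `ofReal ((F ⋆ G) x)` is the integral over `l, m > 0` of
`|{F > l} ∩ (x - {G > m})|`. For the rearrangements these superlevel sets are `[0, a_l)` and
`[0, b_m)`, where `a_l = |{f > l}|` and `b_m = |{g > m}|`, so at the point `c` the integrand is at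
most the overlap of `[0, a_l]` with `c - [0, b_m]`. For unimodal `f` and `g` the superlevel sets
are, up to the mode, intervals `[p_l, q_l]` and `[r_m, s_m]` of the same lengths, nested in `l`
and in `m`. For a single pair `(l, m)`, the shifts `x` for which `[p_l, q_l] ∩ (x - [r_m, s_m])` is
at least as long as `[0, a_l] ∩ (c - [0, b_m])` form an interval; nestedness makes these intervals
pairwise intersecting, so (Helly's theorem on the line) they have a common point `x₁`. For `x`
within `η` of `x₁` every overlap shrinks by at most `η`, so on a set of positive measure
`(f ⋆ g)(x)` dominates the bound for `(f↓ ⋆ g↓)(c)` with every overlap decreased by `η`;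
monotone convergence as `η → 0` finishes the proof.
-/

open Set

noncomputable def distributionFn (f : ℝ → ℝ) (l : ℝ) : ℝ≥0∞ := volume {y | l < f y}

section Rearrangement

variable {f : ℝ → ℝ}

theorem distributionFn_antitone (f : ℝ → ℝ) : Antitone (distributionFn f) :=
  fun _ _ h => measure_mono fun _ hy => h.trans_lt hy

theorem distributionFn_of_neg (hf0 : ∀ y, 0 ≤ f y) {l : ℝ} (hl : l < 0) :
    distributionFn f l = ⊤ := by
  have : {y | l < f y} = univ := eq_univ_of_forall fun y => hl.trans_le (hf0 y)
  rw [distributionFn, this, Real.volume_univ]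

theorem volume_setOf_le_ne_top (hfi : Integrable f) {l : ℝ} (hl : 0 < l) :
    volume {y | l ≤ f y} ≠ ⊤ :=
  ne_top_of_le_ne_top (hfi.measure_norm_ge_lt_top hl).ne
    (measure_mono fun _ hy => le_trans hy (Real.le_norm_self _))

theorem distributionFn_ne_top (hfi : Integrable f) {l : ℝ} (hl : 0 < l) :
    distributionFn f l ≠ ⊤ :=
  ne_top_of_le_ne_top (volume_setOf_le_ne_top hfi hl) (measure_mono fun y (hy : l < f y) => hy.le)

theorem mul_toReal_distributionFn_le_integral (hf0 : ∀ y, 0 ≤ f y) (hfi : Integrable f) {l : ℝ}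
    (hl : 0 < l) : l * (distributionFn f l).toReal ≤ ∫ y, f y :=
  calc l * (distributionFn f l).toReal ≤ l * volume.real {y | l ≤ f y} := by
        gcongr
        exact ENNReal.toReal_mono (volume_setOf_le_ne_top hfi hl)
          (measure_mono fun y (hy : l < f y) => hy.le)
    _ ≤ ∫ y, f y := mul_meas_ge_le_integral_of_nonneg (ae_of_all _ hf0) hfi l

theorem decRearrNN_of_neg (f : ℝ → ℝ) {x : ℝ} (hx : x < 0) : decRearrNN f x = 0 := by
  simp [decRearrNN, setRearr, not_le.2 hx]

theorem mem_setRearr_of_neg (hf0 : ∀ y, 0 ≤ f y) {x l : ℝ} (hx : 0 ≤ x) (hl : l < 0) :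
    x ∈ setRearr {y | l < f y} := by
  refine ⟨hx, ?_⟩
  rw [← distributionFn, distributionFn_of_neg hf0 hl]
  exact ENNReal.ofReal_lt_top

theorem bddAbove_setOf_mem_setRearr (hf0 : ∀ y, 0 ≤ f y) (hfi : Integrable f) {x : ℝ}
    (hx : 0 < x) : BddAbove {l : ℝ | x ∈ setRearr {y | l < f y}} := by
  refine ⟨max 0 ((∫ y, f y) / x), fun l ⟨_, hl⟩ => ?_⟩
  rcases le_or_gt l 0 with hl0 | hl0
  · exact hl0.trans (le_max_left _ _)
  refine le_max_of_le_right ((le_div_iff₀ hx).2 ?_)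
  have hlt : x < (distributionFn f l).toReal :=
    (ENNReal.ofReal_lt_iff_lt_toReal hx.le (distributionFn_ne_top hfi hl0)).1 hl
  nlinarith [mul_toReal_distributionFn_le_integral hf0 hfi hl0]

theorem decRearrNN_nonneg (hf0 : ∀ y, 0 ≤ f y) (x : ℝ) : 0 ≤ decRearrNN f x := by
  rcases lt_or_ge x 0 with hx | hx
  · exact (decRearrNN_of_neg f hx).ge
  by_cases hb : BddAbove {l : ℝ | x ∈ setRearr {y | l < f y}}
  · refine le_of_forall_lt fun l hl => ?_
    have : l / 2 ≤ decRearrNN f x := le_csSup hb (mem_setRearr_of_neg hf0 hx (by linarith))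
    linarith
  · exact (Real.sSup_of_not_bddAbove hb).ge

theorem decRearrNN_antitoneOn (hf0 : ∀ y, 0 ≤ f y) (hfi : Integrable f) :
    AntitoneOn (decRearrNN f) (Ioi 0) := fun _ hx _ _ hxx' =>
  csSup_le_csSup (bddAbove_setOf_mem_setRearr hf0 hfi hx)
    ⟨-1, mem_setRearr_of_neg hf0 (hx.out.le.trans hxx') neg_one_lt_zero⟩
    fun _ ⟨_, hl⟩ => ⟨hx.out.le, (ENNReal.ofReal_le_ofReal hxx').trans_lt hl⟩

theorem mem_setRearr_of_lt_decRearrNN {x l : ℝ} (hl : 0 ≤ l) (h : l < decRearrNN f x) :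
    x ∈ setRearr {y | l < f y} := by
  have hne : {l : ℝ | x ∈ setRearr {y | l < f y}}.Nonempty := by
    by_contra hemp
    rw [not_nonempty_iff_eq_empty] at hemp
    simp [decRearrNN, hemp] at h
    linarith
  obtain ⟨l', ⟨hx, hl'⟩, hll'⟩ := exists_lt_of_lt_csSup hne h
  exact ⟨hx, hl'.trans_le (distributionFn_antitone f hll'.le)⟩

theorem measurable_decRearrNN (hf0 : ∀ y, 0 ≤ f y) (hfi : Integrable f) :
    Measurable (decRearrNN f) := by
  -- `f↓` vanishes on `(-∞, 0)` and is antitone on `(0, ∞)`, so its superlevel sets are intervals.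
  refine measurable_of_Ioi fun l => (ordConnected_def.2 fun a ha b hb z hz => ?_).measurableSet
  rcases lt_or_ge 0 z with hz0 | hz0
  · exact lt_of_lt_of_le hb (decRearrNN_antitoneOn hf0 hfi hz0 (hz0.trans_le hz.2) hz.2)
  rcases hz.1.eq_or_lt with rfl | haz
  · exact ha
  have : l < 0 := by simpa [decRearrNN_of_neg f (haz.trans_le hz0)] using ha.out
  exact this.trans_le (decRearrNN_nonneg hf0 z)

theorem lt_toReal_distributionFn_of_lt_decRearrNN (hfi : Integrable f) {x l : ℝ} (hl : 0 < l)
    (h : l < decRearrNN f x) : 0 ≤ x ∧ x < (distributionFn f l).toReal := by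
  obtain ⟨hx, hlt⟩ := mem_setRearr_of_lt_decRearrNN hl.le h
  exact ⟨hx, (ENNReal.ofReal_lt_iff_lt_toReal hx (distributionFn_ne_top hfi hl)).1 hlt⟩

end Rearrangement

/-- The signed length of `[p, q] ∩ [x - s, x - r]`. -/
def intervalOverlap (p q r s x : ℝ) : ℝ := min q (x - r) - max p (x - s)

section IntervalOverlap

theorem intervalOverlap_zero_le (a b c : ℝ) :
    intervalOverlap 0 a 0 b c ≤ a ∧ intervalOverlap 0 a 0 b c ≤ b ∧
      intervalOverlap 0 a 0 b c ≤ c ∧ intervalOverlap 0 a 0 b c ≤ a + b - c := by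
  simp only [intervalOverlap, sub_zero]
  refine ⟨?_, ?_, ?_, ?_⟩ <;>
    linarith [min_le_left a c, min_le_right a c, le_max_left 0 (c - b), le_max_right 0 (c - b)]

theorem add_add_intervalOverlap_le {p q r s p' q' r' s' c : ℝ}
    (hpq : p ≤ p' ∧ q' ≤ q ∨ p' ≤ p ∧ q ≤ q') (hrs : r ≤ r' ∧ s' ≤ s ∨ r' ≤ r ∧ s ≤ s') :
    p + r + intervalOverlap 0 (q - p) 0 (s - r) c ≤
      q' + s' - intervalOverlap 0 (q' - p') 0 (s' - r') c := by
  obtain ⟨h₁, h₂, h₃, h₄⟩ := intervalOverlap_zero_le (q - p) (s - r) c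
  obtain ⟨h₁', h₂', h₃', h₄'⟩ := intervalOverlap_zero_le (q' - p') (s' - r') c
  rcases hpq with ⟨hp, hq⟩ | ⟨hp, hq⟩ <;> rcases hrs with ⟨hr, hs⟩ | ⟨hr, hs⟩ <;> linarith

theorem le_intervalOverlap {p q r s x m : ℝ} (hpq : m ≤ q - p) (hrs : m ≤ s - r)
    (hlo : p + r + m ≤ x) (hhi : x ≤ q + s - m) : m ≤ intervalOverlap p q r s x := by
  simp only [intervalOverlap, min_def, max_def]
  split_ifs <;> linarith

theorem intervalOverlap_sub_le_intervalOverlap (p q r s : ℝ) {x x' η : ℝ} (h : |x' - x| ≤ η) :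
    intervalOverlap p q r s x - η ≤ intervalOverlap p q r s x' := by
  rw [abs_le] at h
  simp only [intervalOverlap, min_def, max_def]
  split_ifs <;> linarith

theorem exists_forall_mem_Icc {ι : Type*} {S : Set ι} {lo hi : ι → ℝ}
    (h : ∀ i ∈ S, ∀ j ∈ S, lo i ≤ hi j) : ∃ x, ∀ i ∈ S, lo i ≤ x ∧ x ≤ hi i := by
  rcases S.eq_empty_or_nonempty with rfl | ⟨i₀, hi₀⟩
  · exact ⟨0, by simp⟩
  have hbdd : BddAbove (lo '' S) := ⟨hi i₀, forall_mem_image.2 fun i hi => h i hi i₀ hi₀⟩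
  exact ⟨sSup (lo '' S), fun i hi => ⟨le_csSup hbdd (mem_image_of_mem lo hi),
    csSup_le (Nonempty.image lo ⟨i₀, hi₀⟩) (forall_mem_image.2 fun j hj => h j hj i hi)⟩⟩

theorem exists_intervalOverlap_le {A B : Set ℝ} {p q r s : ℝ → ℝ} (c : ℝ)
    (hp : MonotoneOn p A) (hq : AntitoneOn q A) (hr : MonotoneOn r B) (hs : AntitoneOn s B) :
    ∃ x, ∀ i ∈ A, ∀ j ∈ B,
      intervalOverlap 0 (q i - p i) 0 (s j - r j) c ≤
        intervalOverlap (p i) (q i) (r j) (s j) x := by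
  have nested : ∀ {f g : ℝ → ℝ} {S : Set ℝ}, MonotoneOn f S → AntitoneOn g S → ∀ i ∈ S, ∀ j ∈ S,
      f i ≤ f j ∧ g j ≤ g i ∨ f j ≤ f i ∧ g i ≤ g j := fun hf hg i hi j hj =>
    (le_total i j).imp (fun h => ⟨hf hi hj h, hg hi hj h⟩) fun h => ⟨hf hj hi h, hg hj hi h⟩
  obtain ⟨x, hx⟩ := exists_forall_mem_Icc (S := A ×ˢ B)
    (lo := fun z => p z.1 + r z.2 + intervalOverlap 0 (q z.1 - p z.1) 0 (s z.2 - r z.2) c)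
    (hi := fun z => q z.1 + s z.2 - intervalOverlap 0 (q z.1 - p z.1) 0 (s z.2 - r z.2) c)
    fun z hz w hw => add_add_intervalOverlap_le (nested hp hq _ hz.1 _ hw.1)
      (nested hr hs _ hz.2 _ hw.2)
  refine ⟨x, fun i hi j hj => ?_⟩
  obtain ⟨h₁, h₂, -, -⟩ := intervalOverlap_zero_le (q i - p i) (s j - r j) c
  exact le_intervalOverlap h₁ h₂ (hx (i, j) ⟨hi, hj⟩).1 (hx (i, j) ⟨hi, hj⟩).2

end IntervalOverlap

theorem lintegral_ofReal_mul_eq_lintegral_measure_inter {α : Type*} [MeasurableSpace α]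
    {μ : Measure α} {F G : α → ℝ} (hF0 : 0 ≤ F) (hG0 : 0 ≤ G) (hF : Measurable F)
    (hG : Measurable G) :
    ∫⁻ t, ENNReal.ofReal (F t) * ENNReal.ofReal (G t) ∂μ =
      ∫⁻ l in Ioi 0, ∫⁻ m in Ioi 0, μ ({t | l < F t} ∩ {t | m < G t}) := by
  calc ∫⁻ t, ENNReal.ofReal (F t) * ENNReal.ofReal (G t) ∂μ
      = ∫⁻ t, ENNReal.ofReal (F t) ∂μ.withDensity fun t => ENNReal.ofReal (G t) := by
        rw [lintegral_withDensity_eq_lintegral_mul _ (by fun_prop) (by fun_prop)]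
        simp only [Pi.mul_apply, mul_comm]
    _ = ∫⁻ l in Ioi 0, ∫⁻ t in {t | l < F t}, ENNReal.ofReal (G t) ∂μ := by
        rw [lintegral_eq_lintegral_meas_lt _ (ae_of_all _ hF0) hF.aemeasurable]
        simp_rw [withDensity_apply _ (measurableSet_lt measurable_const hF)]
    _ = ∫⁻ l in Ioi 0, ∫⁻ m in Ioi 0, μ ({t | l < F t} ∩ {t | m < G t}) := by
        refine lintegral_congr fun l => ?_
        rw [lintegral_eq_lintegral_meas_lt _ (ae_of_all _ hG0) hG.aemeasurable]
        simp_rw [Measure.restrict_apply (measurableSet_lt measurable_const hG), inter_comm]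

theorem monotone_ofReal_sub_one_div (a : ℝ) :
    Monotone fun n : ℕ => ENNReal.ofReal (a - 1 / (n + 1)) :=
  fun _ _ h => ENNReal.ofReal_le_ofReal (sub_le_sub_left (Nat.one_div_le_one_div h) _)

theorem ofReal_eq_iSup_ofReal_sub_one_div (a : ℝ) :
    ENNReal.ofReal a = ⨆ n : ℕ, ENNReal.ofReal (a - 1 / (n + 1)) := by
  refine tendsto_nhds_unique ?_ (tendsto_atTop_iSup (monotone_ofReal_sub_one_div a))
  simpa using ENNReal.tendsto_ofReal
    (tendsto_const_nhds (x := a) |>.sub tendsto_one_div_add_atTop_nhds_zero_nat)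

theorem lintegral_lintegral_ofReal_le_of_forall_sub_le {α β : Type*} [MeasurableSpace α]
    [MeasurableSpace β] {μ : Measure α} {ν : Measure β} [SFinite ν] {F : α → β → ℝ}
    (hF : Measurable (Function.uncurry F)) {S : ℝ≥0∞}
    (h : ∀ η > 0, ∫⁻ x, ∫⁻ y, ENNReal.ofReal (F x y - η) ∂ν ∂μ ≤ S) :
    ∫⁻ x, ∫⁻ y, ENNReal.ofReal (F x y) ∂ν ∂μ ≤ S := by
  have hmeas (n : ℕ) : Measurable
      (Function.uncurry fun x y => ENNReal.ofReal (F x y - 1 / (n + 1))) :=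
    ENNReal.measurable_ofReal.comp (hF.sub_const _)
  calc ∫⁻ x, ∫⁻ y, ENNReal.ofReal (F x y) ∂ν ∂μ
      = ∫⁻ x, ⨆ n : ℕ, ∫⁻ y, ENNReal.ofReal (F x y - 1 / (n + 1)) ∂ν ∂μ :=
        lintegral_congr fun x => by
          simp_rw [ofReal_eq_iSup_ofReal_sub_one_div (F x _)]
          exact lintegral_iSup (fun n => (hmeas n).comp measurable_prodMk_left)
            fun _ _ h y => monotone_ofReal_sub_one_div _ h
    _ = ⨆ n : ℕ, ∫⁻ x, ∫⁻ y, ENNReal.ofReal (F x y - 1 / (n + 1)) ∂ν ∂μ :=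
        lintegral_iSup (fun n => (hmeas n).lintegral_prod_right')
          fun _ _ h x => lintegral_mono fun y => monotone_ofReal_sub_one_div _ h
    _ ≤ S := iSup_le fun _ => h _ Nat.one_div_pos_of_nat

namespace Set.OrdConnected

variable {s : Set ℝ}

theorem bddBelow_bddAbove_of_volume_ne_top (hs : s.OrdConnected) (h : volume s ≠ ⊤) :
    BddBelow s ∧ BddAbove s := by
  constructor <;> by_contra hb
  · obtain ⟨y, hy⟩ := nonempty_of_not_bddBelow hb
    refine h (measure_mono_top (fun w (hw : w ≤ y) => ?_) Real.volume_Iic)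
    obtain ⟨z, hz, hzw⟩ := not_bddBelow_iff.1 hb w
    exact hs.out hz hy ⟨hzw.le, hw⟩
  · obtain ⟨y, hy⟩ := nonempty_of_not_bddAbove hb
    refine h (measure_mono_top (fun w (hw : y ≤ w) => ?_) Real.volume_Ici)
    obtain ⟨z, hz, hzw⟩ := not_bddAbove_iff.1 hb w
    exact hs.out hy hz ⟨hw, hzw.le⟩

theorem volume_eq (hs : s.OrdConnected) (hne : s.Nonempty) (hb : BddBelow s) (ha : BddAbove s) :
    volume s = ENNReal.ofReal (sSup s - sInf s) :=
  le_antisymm (Real.volume_Icc ▸ measure_mono (subset_Icc_csInf_csSup hb ha))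
    (Real.volume_Ioo ▸ measure_mono
      (IsConnected.Ioo_csInf_csSup_subset ⟨hne, hs.isPreconnected⟩ hb ha))

end Set.OrdConnected

section Convolution

variable {F G : ℝ → ℝ}

theorem ofReal_conv_eq_lintegral_volume_inter (hF0 : 0 ≤ F) (hG0 : 0 ≤ G) (hF : Measurable F)
    (hG : Measurable G) {x : ℝ} (hx : Integrable fun t => F t * G (x - t)) :
    ENNReal.ofReal (conv F G x) =
      ∫⁻ l in Ioi 0, ∫⁻ m in Ioi 0, volume ({t | l < F t} ∩ {t | m < G (x - t)}) := by
  rw [conv, ofReal_integral_eq_lintegral_ofReal hx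
    (ae_of_all _ fun t => mul_nonneg (hF0 t) (hG0 _))]
  simp_rw [ENNReal.ofReal_mul (hF0 _)]
  exact lintegral_ofReal_mul_eq_lintegral_measure_inter hF0 (fun t => hG0 (x - t)) hF (by fun_prop)

theorem ofReal_conv_le_lintegral_volume_inter (hF0 : 0 ≤ F) (hG0 : 0 ≤ G) (hF : Measurable F)
    (hG : Measurable G) (x : ℝ) :
    ENNReal.ofReal (conv F G x) ≤
      ∫⁻ l in Ioi 0, ∫⁻ m in Ioi 0, volume ({t | l < F t} ∩ {t | m < G (x - t)}) := by
  by_cases hx : Integrable fun t => F t * G (x - t)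
  · exact (ofReal_conv_eq_lintegral_volume_inter hF0 hG0 hF hG hx).le
  · simp [conv, integral_undef hx]

theorem ae_ofReal_conv_eq_lintegral_volume_inter (hF0 : 0 ≤ F) (hG0 : 0 ≤ G) (hF : Measurable F)
    (hG : Measurable G) (hFi : Integrable F) (hGi : Integrable G) :
    ∀ᵐ x, ENNReal.ofReal (conv F G x) =
      ∫⁻ l in Ioi 0, ∫⁻ m in Ioi 0, volume ({t | l < F t} ∩ {t | m < G (x - t)}) := by
  filter_upwards [hFi.ae_convolution_exists (ContinuousLinearMap.mul ℝ ℝ) hGi] with x hx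
  exact ofReal_conv_eq_lintegral_volume_inter hF0 hG0 hF hG hx

theorem ofReal_intervalOverlap_le_volume_inter {p q r s x₀ y₀ l m : ℝ} (x : ℝ)
    (hF : Ioo p q \ {x₀} ⊆ {y | l < F y}) (hG : Ioo r s \ {y₀} ⊆ {y | m < G y}) :
    ENNReal.ofReal (intervalOverlap p q r s x) ≤
      volume ({t | l < F t} ∩ {t | m < G (x - t)}) := by
  rw [intervalOverlap, ← Real.volume_Ioo,
    ← measure_sdiff_null (t := {x₀, x - y₀}) ((toFinite _).measure_zero _)]
  refine measure_mono fun t ⟨⟨h₁, h₂⟩, ht⟩ => ?_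
  simp only [mem_insert_iff, mem_singleton_iff, not_or] at ht
  have := le_max_left p (x - s); have := le_max_right p (x - s)
  have := min_le_left q (x - r); have := min_le_right q (x - r)
  exact ⟨hF ⟨⟨by linarith, by linarith⟩, ht.1⟩,
    hG ⟨⟨by linarith, by linarith⟩, fun h => ht.2 (by simp at h; linarith)⟩⟩

end Convolution

section RearrangedConvolution

variable {f g : ℝ → ℝ}

theorem volume_inter_setOf_lt_decRearrNN_le (hfi : Integrable f) (hgi : Integrable g) {l m : ℝ}
    (hl : 0 < l) (hm : 0 < m) (c : ℝ) :
    volume ({t | l < decRearrNN f t} ∩ {t | m < decRearrNN g (c - t)}) ≤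
      ENNReal.ofReal (intervalOverlap 0 (distributionFn f l).toReal
        0 (distributionFn g m).toReal c) := by
  rw [intervalOverlap, sub_zero, ← Real.volume_Icc]
  refine measure_mono fun t ⟨htf, htg⟩ => ?_
  obtain ⟨ht₀, hta⟩ := lt_toReal_distributionFn_of_lt_decRearrNN hfi hl htf
  obtain ⟨htc, htb⟩ := lt_toReal_distributionFn_of_lt_decRearrNN hgi hm htg
  exact ⟨max_le ht₀ (by linarith), le_min hta.le (by linarith)⟩

theorem ofReal_conv_decRearrNN_le (hf0 : ∀ y, 0 ≤ f y) (hg0 : ∀ y, 0 ≤ g y)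
    (hfi : Integrable f) (hgi : Integrable g) (c : ℝ) :
    ENNReal.ofReal (conv (decRearrNN f) (decRearrNN g) c) ≤
      ∫⁻ l in Ioi 0, ∫⁻ m in Ioi 0, ENNReal.ofReal
        (intervalOverlap 0 (distributionFn f l).toReal 0 (distributionFn g m).toReal c) :=
  (ofReal_conv_le_lintegral_volume_inter (decRearrNN_nonneg hf0) (decRearrNN_nonneg hg0)
    (measurable_decRearrNN hf0 hfi) (measurable_decRearrNN hg0 hgi) c).trans <|
    setLIntegral_mono' measurableSet_Ioi fun _ hl => setLIntegral_mono' measurableSet_Ioi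
      fun _ hm => volume_inter_setOf_lt_decRearrNN_le hfi hgi hl hm c

end RearrangedConvolution

section Unimodal

variable {f : ℝ → ℝ}

theorem ordConnected_insert_setOf_lt {x₀ : ℝ} (hm : MonotoneOn f (Iio x₀))
    (ha : AntitoneOn f (Ioi x₀)) (l : ℝ) : (insert x₀ {y | l < f y}).OrdConnected := by
  refine ordConnected_def.2 fun a ha' b hb z hz => ?_
  rcases lt_trichotomy z x₀ with hzx | rfl | hzx
  · rcases ha' with rfl | ha'
    · exact absurd (hz.1.trans_lt hzx) (lt_irrefl _)
    · exact Or.inr (ha'.trans_le (hm (hz.1.trans_lt hzx) hzx hz.1))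
  · exact Or.inl rfl
  · rcases hb with rfl | hb
    · exact absurd (hzx.trans_le hz.2) (lt_irrefl _)
    · exact Or.inr (hb.trans_le (ha hzx (hzx.trans_le hz.2) hz.2))

theorem Unimodal.measurable (hf : Unimodal f) : Measurable f := by
  obtain ⟨x₀, hm, ha⟩ := hf
  exact measurable_of_Ioi fun l =>
    measurableSet_insert.1 (ordConnected_insert_setOf_lt hm ha l).measurableSet

theorem Unimodal.exists_superlevel_intervals (hf : Unimodal f) (hfi : Integrable f) :
    ∃ x₀ : ℝ, ∃ p q : ℝ → ℝ, MonotoneOn p (Ioi 0) ∧ AntitoneOn q (Ioi 0) ∧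
      ∀ l > 0, Ioo (p l) (q l) \ {x₀} ⊆ {y | l < f y} ∧
        q l - p l = (distributionFn f l).toReal := by
  obtain ⟨x₀, hm, ha⟩ := hf
  set I : ℝ → Set ℝ := fun l => insert x₀ {y | l < f y}
  have hconn : ∀ l, (I l).OrdConnected := ordConnected_insert_setOf_lt hm ha
  have hvol : ∀ l, volume (I l) = distributionFn f l := fun _ =>
    measure_congr (insert_ae_eq_self _ _)
  have hbdd : ∀ l > 0, BddBelow (I l) ∧ BddAbove (I l) := fun l hl =>
    (hconn l).bddBelow_bddAbove_of_volume_ne_top ((hvol l).symm ▸ distributionFn_ne_top hfi hl)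
  have hsub : ∀ {l l'}, l ≤ l' → I l' ⊆ I l := fun h =>
    insert_subset_insert fun _ hy => h.trans_lt hy
  refine ⟨x₀, fun l => sInf (I l), fun l => sSup (I l),
    fun l hl _ _ h => csInf_le_csInf (hbdd l hl).1 (insert_nonempty _ _) (hsub h),
    fun l hl _ _ h => csSup_le_csSup (hbdd l hl).2 (insert_nonempty _ _) (hsub h),
    fun l hl => ⟨fun y ⟨hy, hyx⟩ => ?_, ?_⟩⟩
  · exact ((IsConnected.Ioo_csInf_csSup_subset ⟨insert_nonempty _ _, (hconn l).isPreconnected⟩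
      (hbdd l hl).1 (hbdd l hl).2 hy).resolve_left hyx)
  · rw [← hvol, (hconn l).volume_eq (insert_nonempty _ _) (hbdd l hl).1 (hbdd l hl).2,
      ENNReal.toReal_ofReal (sub_nonneg.2 (csInf_le_csSup (insert_nonempty _ _)
        (hbdd l hl).1 (hbdd l hl).2))]

end Unimodal

theorem lintegral_intervalOverlap_le_essSupNN_conv {f g : ℝ → ℝ} (hf0 : ∀ y, 0 ≤ f y)
    (hg0 : ∀ y, 0 ≤ g y) (hfi : Integrable f) (hgi : Integrable g) (hfu : Unimodal f)
    (hgu : Unimodal g) (c : ℝ) :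
    ∫⁻ l in Ioi 0, ∫⁻ m in Ioi 0, ENNReal.ofReal
        (intervalOverlap 0 (distributionFn f l).toReal 0 (distributionFn g m).toReal c) ≤
      essSupNN (conv f g) := by
  obtain ⟨x₀, p, q, hp, hq, hpq⟩ := hfu.exists_superlevel_intervals hfi
  obtain ⟨y₀, r, s, hr, hs, hrs⟩ := hgu.exists_superlevel_intervals hgi
  obtain ⟨x₁, hx₁⟩ := exists_intervalOverlap_le c hp hq hr hs
  have hmeas : Measurable (Function.uncurry fun l m =>
      intervalOverlap 0 (distributionFn f l).toReal 0 (distributionFn g m).toReal c) := by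
    have hf := (distributionFn_antitone f).measurable.ennreal_toReal
    have hg := (distributionFn_antitone g).measurable.ennreal_toReal
    exact ((hf.comp measurable_fst).min measurable_const).sub
      (measurable_const.max (measurable_const.sub (hg.comp measurable_snd)))
  refine lintegral_lintegral_ofReal_le_of_forall_sub_le hmeas fun η hη => ?_
  have hE : volume (Ioo (x₁ - η) (x₁ + η)) ≠ 0 := by
    rw [Real.volume_Ioo, Ne, ENNReal.ofReal_eq_zero, not_le]
    linarith
  obtain ⟨x, hxE, hconv, hess⟩ := Measure.exists_mem_of_measure_ne_zero_of_ae hE <|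
    ae_restrict_of_ae <| (ae_ofReal_conv_eq_lintegral_volume_inter hf0 hg0 hfu.measurable
      hgu.measurable hfi hgi).and (ae_le_essSup fun x => ENNReal.ofReal (conv f g x))
  have hxx₁ : |x - x₁| ≤ η := abs_sub_lt_iff.2 ⟨by linarith [hxE.2], by linarith [hxE.1]⟩ |>.le
  calc _ ≤ ∫⁻ l in Ioi 0, ∫⁻ m in Ioi 0, volume ({t | l < f t} ∩ {t | m < g (x - t)}) := by
        refine setLIntegral_mono' measurableSet_Ioi fun l hl =>
          setLIntegral_mono' measurableSet_Ioi fun m hm => ?_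
        rw [← (hpq l hl).2, ← (hrs m hm).2]
        exact (ENNReal.ofReal_le_ofReal <| (sub_le_sub_right (hx₁ l hl m hm) η).trans
          (intervalOverlap_sub_le_intervalOverlap _ _ _ _ hxx₁)).trans
          (ofReal_intervalOverlap_le_volume_inter x (hpq l hl).1 (hrs m hm).1)
    _ = ENNReal.ofReal (conv f g x) := hconv.symm
    _ ≤ essSupNN (conv f g) := hess

/-- For integrable unimodal nonnegative `f, g` on `ℝ`,
`‖f ⋆ g‖_∞ ≥ ‖f↓ ⋆ g↓‖_∞`. -/
theorem conv_essSup_ge_rearranged (f g : ℝ → ℝ)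
    (hf0 : ∀ x, 0 ≤ f x) (hg0 : ∀ x, 0 ≤ g x)
    (hfi : Integrable f) (hgi : Integrable g)
    (hfu : Unimodal f) (hgu : Unimodal g) :
    essSupNN (conv (decRearrNN f) (decRearrNN g)) ≤ essSupNN (conv f g) :=
  essSup_le_of_ae_le _ <| ae_of_all _ fun c => (ofReal_conv_decRearrNN_le hf0 hg0 hfi hgi c).trans
    (lintegral_intervalOverlap_le_essSupNN_conv hf0 hg0 hfi hgi hfu hgu c)
end

section
/- Let f : ℤ₊ → [0,1] be a non-increasing log-concave probability mass function on the non-negative integers. Then sup_{k ≥ 0} (k+1) f(k) > 1/e. -/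
/-!
Let `T n = ∑_{j ≥ n} f j` be the tail sums, so `T 0 = 1`, `T n → 0` and `f n = T n - T (n + 1)`.
Tails of a log-concave sequence are log-concave, so the ratios `T (j + 1) / T j` decrease.
Take the first `n + 1` with `T (n + 1) ≤ 1/e` and put `x = T (n + 1) / T n`: then `T n > 1/e`,
`x ^ n ≤ T n` and `x ^ (n + 1) ≤ T (n + 1) ≤ 1/e`. Either `(n + 1)(1 - x) ≥ 1`, and
`(n + 1) f n = (n + 1)(1 - x) T n > 1/e`, or `x` lies where `y ↦ (1 - y) y ^ n` decreases, and
comparing with `b = e^{-1/(n+1)}` gives `(n + 1)(1 - x) x ^ n ≥ (n + 1)(1 - b) b ^ n > 1/e`.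
-/

open Filter Topology

section LogConcave

variable {f : ℕ → ℝ}

lemma mul_succ_le_succ_mul_of_logConcave (h0 : ∀ k, 0 ≤ f k) (hf : Antitone f)
    (hlc : ∀ k, f k * f (k + 2) ≤ f (k + 1) ^ 2) {a b : ℕ} (hab : a ≤ b) :
    f a * f (b + 1) ≤ f (a + 1) * f b := by
  induction b, hab using Nat.le_induction with
  | base => exact (mul_comm _ _).le
  | succ b hab ih =>
    rcases (h0 b).eq_or_lt with hb | hb
    · have hb2 : f (b + 2) = 0 := le_antisymm (hb ▸ hf (by omega)) (h0 _)
      rw [hb2, mul_zero]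
      exact mul_nonneg (h0 _) (h0 _)
    · refine le_of_mul_le_mul_left ?_ hb
      calc f b * (f a * f (b + 1 + 1)) = f a * (f b * f (b + 2)) := by ring
        _ ≤ f a * f (b + 1) ^ 2 := mul_le_mul_of_nonneg_left (hlc b) (h0 a)
        _ = (f a * f (b + 1)) * f (b + 1) := by ring
        _ ≤ (f (a + 1) * f b) * f (b + 1) := mul_le_mul_of_nonneg_right ih (h0 _)
        _ = f b * (f (a + 1) * f (b + 1)) := by ring

lemma mul_add_le_add_mul_of_logConcave (h0 : ∀ k, 0 ≤ f k) (hf : Antitone f)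
    (hlc : ∀ k, f k * f (k + 2) ≤ f (k + 1) ^ 2) (p : ℕ) {a d : ℕ} (had : a ≤ d) :
    f a * f (d + p) ≤ f (a + p) * f d := by
  induction p generalizing a with
  | zero => rfl
  | succ p ih =>
    rcases had.eq_or_lt with rfl | had
    · exact (mul_comm _ _).le
    · calc f a * f (d + p + 1) ≤ f (a + 1) * f (d + p) :=
            mul_succ_le_succ_mul_of_logConcave h0 hf hlc (by omega)
        _ ≤ f (a + 1 + p) * f d := ih had
        _ = f (a + (p + 1)) * f d := by rw [add_assoc, add_comm 1 p]

end LogConcave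

noncomputable def tailSum (f : ℕ → ℝ) (n : ℕ) : ℝ := ∑' j, f (j + n)

section TailSum

variable {f : ℕ → ℝ}

lemma tailSum_eq_add (hs : Summable f) (n : ℕ) : tailSum f n = f n + tailSum f (n + 1) := by
  rw [tailSum, ((summable_nat_add_iff n).mpr hs).tsum_eq_zero_add, zero_add, tailSum]
  simp only [add_right_comm _ 1 n, add_assoc]

lemma tailSum_nonneg (h0 : ∀ k, 0 ≤ f k) (n : ℕ) : 0 ≤ tailSum f n :=
  tsum_nonneg fun j ↦ h0 (j + n)

lemma tendsto_tailSum (f : ℕ → ℝ) : Tendsto (tailSum f) atTop (𝓝 0) :=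
  tendsto_sum_nat_add f

lemma tailSum_mul_tailSum_succ_le (h0 : ∀ k, 0 ≤ f k) (hf : Antitone f)
    (hlc : ∀ k, f k * f (k + 2) ≤ f (k + 1) ^ 2) (hs : Summable f) {j n : ℕ} (hjn : j ≤ n) :
    tailSum f j * tailSum f (n + 1) ≤ tailSum f (j + 1) * tailSum f n := by
  have hs' (m : ℕ) : Summable fun i ↦ f (i + m) := (summable_nat_add_iff m).mpr hs
  have hterm : f j * tailSum f (n + 1) ≤ f n * tailSum f (j + 1) := by
    rw [tailSum, tailSum, ← tsum_mul_left, ← tsum_mul_left]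
    refine ((hs' _).mul_left _).tsum_le_tsum (fun i ↦ ?_) ((hs' _).mul_left _)
    have h := mul_add_le_add_mul_of_logConcave h0 hf hlc (i + 1) hjn
    rw [show n + (i + 1) = i + (n + 1) by omega, show j + (i + 1) = i + (j + 1) by omega] at h
    linarith
  rw [tailSum_eq_add hs j, tailSum_eq_add hs n]
  nlinarith

end TailSum

lemma exists_lt_and_succ_le {u : ℕ → ℝ} {c : ℝ} (h0 : c < u 0) (h : ∃ m, u m ≤ c) :
    ∃ n, c < u n ∧ u (n + 1) ≤ c := by
  by_contra! hstep
  obtain ⟨m, hm⟩ := h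
  exact (Nat.rec h0 hstep m : c < u m).not_ge hm

lemma mul_pow_le_of_mul_le_succ {u : ℕ → ℝ} {x : ℝ} (hx : 0 ≤ x) {n : ℕ}
    (h : ∀ j < n, u j * x ≤ u (j + 1)) : u 0 * x ^ n ≤ u n := by
  induction n with
  | zero => simp
  | succ n ih =>
    calc u 0 * x ^ (n + 1) = u 0 * x ^ n * x := by ring
      _ ≤ u n * x := mul_le_mul_of_nonneg_right (ih fun j hj ↦ h j (by omega)) hx
      _ ≤ u (n + 1) := h n (by omega)

lemma succ_mul_le_tsum {f : ℕ → ℝ} (h0 : ∀ k, 0 ≤ f k) (hf : Antitone f) (hs : Summable f)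
    (k : ℕ) : ((k : ℝ) + 1) * f k ≤ ∑' j, f j :=
  calc ((k : ℝ) + 1) * f k = ∑ _j ∈ Finset.range (k + 1), f k := by simp
    _ ≤ ∑ j ∈ Finset.range (k + 1), f j :=
        Finset.sum_le_sum fun j hj ↦ hf (Finset.mem_range_succ_iff.mp hj)
    _ ≤ ∑' j, f j := hs.sum_le_tsum _ fun j _ ↦ h0 j

lemma antitoneOn_one_sub_mul_pow (n : ℕ) :
    AntitoneOn (fun y : ℝ ↦ (1 - y) * y ^ n) (Set.Icc ((n : ℝ) / (n + 1)) 1) := by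
  refine antitoneOn_of_hasDerivWithinAt_nonpos (convex_Icc _ _) (by fun_prop)
    (fun y _ ↦ (((hasDerivAt_id y).const_sub 1).mul (hasDerivAt_pow n y)).hasDerivWithinAt)
    fun y hy ↦ ?_
  rw [interior_Icc] at hy
  have hy0 : 0 < y := lt_of_le_of_lt (by positivity) hy.1
  have hny : (n : ℝ) ≤ (n + 1) * y := by
    have := hy.1
    rw [div_lt_iff₀ (by positivity)] at this
    linarith
  rcases n with _ | n
  · simp
  · have hpow : y ^ (n + 1) = y * y ^ n := pow_succ' y n
    simp only [Nat.add_sub_cancel, id, hpow]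
    push_cast at hny ⊢
    nlinarith [pow_nonneg hy0.le n]

lemma exp_neg_one_lt_succ_mul_one_sub_exp_mul_pow (n : ℕ) :
    Real.exp (-1) <
      (n + 1) * ((1 - Real.exp (-((n : ℝ) + 1)⁻¹)) * Real.exp (-((n : ℝ) + 1)⁻¹) ^ n) := by
  set s : ℝ := ((n : ℝ) + 1)⁻¹
  have hs : 0 < s := by positivity
  have hns : (n + 1) * s = 1 := mul_inv_cancel₀ (by positivity)
  have hpow : (1 - Real.exp (-s)) * Real.exp (-s) ^ n = Real.exp (-1) * (Real.exp s - 1) := by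
    rw [← Real.exp_nat_mul, sub_mul, one_mul, ← Real.exp_add, mul_sub, mul_one, ← Real.exp_add]
    congr 2 <;> linear_combination (-1 : ℝ) * hns
  have hexp := Real.add_one_lt_exp hs.ne'
  have hgt : 1 < (n + 1) * (Real.exp s - 1) := by nlinarith
  rw [hpow]
  nlinarith [mul_lt_mul_of_pos_left hgt (Real.exp_pos (-1))]

lemma exp_neg_one_lt_succ_mul_one_sub_mul {n : ℕ} {x t : ℝ}
    (hx : x ^ (n + 1) ≤ Real.exp (-1)) (ht : Real.exp (-1) < t) (hxt : x ^ n ≤ t) :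
    Real.exp (-1) < (n + 1) * ((1 - x) * t) := by
  have hn : (0 : ℝ) < n + 1 := by positivity
  by_cases hlarge : 1 ≤ (n + 1) * (1 - x)
  · nlinarith [Real.exp_pos (-1)]
  set b := Real.exp (-((n : ℝ) + 1)⁻¹)
  have hxlow : (n : ℝ) / (n + 1) ≤ x := by
    rw [div_le_iff₀ hn]
    linarith
  have hb1 : b < 1 := Real.exp_lt_one_iff.mpr (by simp only [neg_neg_iff_pos]; positivity)
  have hblow : (n : ℝ) / (n + 1) ≤ b :=
    calc (n : ℝ) / (n + 1) = -((n : ℝ) + 1)⁻¹ + 1 := by field_simp; ring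
      _ ≤ b := Real.add_one_le_exp _
  have hxb : x ≤ b := by
    refine le_of_pow_le_pow_left₀ n.succ_ne_zero (Real.exp_nonneg _) (hx.trans_eq ?_)
    rw [← Real.exp_nat_mul]
    push_cast
    rw [mul_neg, mul_inv_cancel₀ hn.ne']
  calc Real.exp (-1) < (n + 1) * ((1 - b) * b ^ n) :=
        exp_neg_one_lt_succ_mul_one_sub_exp_mul_pow n
    _ ≤ (n + 1) * ((1 - x) * x ^ n) := by
        gcongr 1
        exact antitoneOn_one_sub_mul_pow n ⟨hxlow, hxb.trans hb1.le⟩ ⟨hblow, hb1.le⟩ hxb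
    _ ≤ (n + 1) * ((1 - x) * t) := by
        gcongr
        linarith

theorem sup_weighted_pmf_gt_inv_e_general (f : ℕ → ℝ)
    (h0 : ∀ k, 0 ≤ f k) (hsum : ∑' k : ℕ, f k = 1)
    (hmono : ∀ k : ℕ, f (k + 1) ≤ f k)
    (hlc : ∀ k : ℕ, f k * f (k + 2) ≤ f (k + 1) ^ 2) :
    1 / Real.exp 1 < ⨆ k : ℕ, ((k : ℝ) + 1) * f k := by
  have hs : Summable f := by
    by_contra h
    simp [tsum_eq_zero_of_not_summable h] at hsum
  have hf : Antitone f := antitone_nat_of_succ_le hmono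
  set T := tailSum f
  have hT0 : T 0 = 1 := hsum
  have hexp : Real.exp (-1) < 1 := Real.exp_lt_one_iff.mpr (by norm_num)
  obtain ⟨n, hTn, hTn1⟩ := exists_lt_and_succ_le (hT0 ▸ hexp)
    ((tendsto_tailSum f).eventually_le_const (Real.exp_pos (-1))).exists
  have hTpos : 0 < T n := (Real.exp_pos _).trans hTn
  set x := T (n + 1) / T n
  have hx0 : 0 ≤ x := div_nonneg (tailSum_nonneg h0 _) hTpos.le
  have hTx : T n * x = T (n + 1) := mul_div_cancel₀ _ hTpos.ne'
  have hxn : x ^ n ≤ T n := by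
    simpa [hT0] using mul_pow_le_of_mul_le_succ (u := T) hx0 fun j hj ↦ by
      rw [mul_div_assoc', div_le_iff₀ hTpos]
      exact tailSum_mul_tailSum_succ_le (j := j) (n := n) h0 hf hlc hs hj.le
  have hxn1 : x ^ (n + 1) ≤ Real.exp (-1) :=
    calc x ^ (n + 1) = x ^ n * x := pow_succ x n
      _ ≤ T n * x := mul_le_mul_of_nonneg_right hxn hx0
      _ ≤ Real.exp (-1) := hTx ▸ hTn1
  have hfn : (1 - x) * T n = f n := by
    linear_combination tailSum_eq_add hs n - hTx
  have hbdd : BddAbove (Set.range fun k : ℕ ↦ ((k : ℝ) + 1) * f k) :=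
    ⟨1, Set.forall_mem_range.mpr fun k ↦ hsum ▸ succ_mul_le_tsum h0 hf hs k⟩
  rw [one_div, ← Real.exp_neg]
  calc Real.exp (-1) < (n + 1) * ((1 - x) * T n) :=
        exp_neg_one_lt_succ_mul_one_sub_mul hxn1 hTn hxn
    _ = (n + 1) * f n := by rw [hfn]
    _ ≤ ⨆ k : ℕ, ((k : ℝ) + 1) * f k := le_ciSup hbdd n

/-- For a non-increasing log-concave pmf `f` on `ℤ₊`:
`sup_{k ≥ 0} (k+1) f(k) > 1/e`. -/
theorem sup_weighted_pmf_gt_inv_e (f : ℕ → ℝ)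
    (h0 : ∀ k, 0 ≤ f k) (h1 : ∀ k, f k ≤ 1) (hsum : ∑' k : ℕ, f k = 1)
    (hmono : ∀ k : ℕ, f (k + 1) ≤ f k)
    (hlc : ∀ k : ℕ, f k * f (k + 2) ≤ f (k + 1) ^ 2) :
    1 / Real.exp 1 < ⨆ k : ℕ, ((k : ℝ) + 1) * f k :=
  sup_weighted_pmf_gt_inv_e_general f h0 hsum hmono hlc
end
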